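/- arXiv:1410.4328 — 6 statements merged into one kernel-verified Lean document; each statement's English description precedes it below -/
import Mathlib

section
/- If E ⊆ 𝔸ⁿ(k) is a constructible Kakeya subset (k algebraically closed), then dim E = n, i.e. the Zariski closure of E is all of 𝔸ⁿ. -/
/-! A polynomial `f` vanishing on `E` vanishes on a line `p + t • v ⊆ E` in each direction `v`,
so the polynomial `t ↦ f (p + t • v)` is zero. Its coefficient of `t ^ deg f` is the top
homogeneous component of `f` evaluated at `v`; hence that component vanishes on all of `kⁿ`,
which over an infinite field forces it, and so `f`, to be zero. -/

/-- A subset `E ⊆ 𝔸ⁿ(k) = kⁿ` is a Kakeya subset if for every nonzero direction `v`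
there is a point `p` such that the line `{p + t • v : t ∈ k}` is contained in `E`. -/
def IsKakeya {k : Type*} [Field k] {n : ℕ} (E : Set (Fin n → k)) : Prop :=
  ∀ v : Fin n → k, v ≠ 0 → ∃ p : Fin n → k, ∀ t : k, p + t • v ∈ E

/-- A subset of `kⁿ` is Zariski closed if it is the zero locus of an ideal of polynomials. -/
def IsZarClosed {k : Type*} [Field k] {n : ℕ} (S : Set (Fin n → k)) : Prop :=
  ∃ I : Ideal (MvPolynomial (Fin n) k), S = MvPolynomial.zeroLocus k I

/-- A subset of `kⁿ` is constructible if it is a finite union of locally closed subsets,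
i.e. of differences of Zariski closed subsets. -/
def IsConstructibleSet {k : Type*} [Field k] {n : ℕ} (S : Set (Fin n → k)) : Prop :=
  ∃ (m : ℕ) (C D : Fin m → Set (Fin n → k)),
    (∀ i, IsZarClosed (C i)) ∧ (∀ i, IsZarClosed (D i)) ∧ S = ⋃ i, (C i \ D i)

open scoped Polynomial

namespace MvPolynomial

variable {R σ : Type*} [CommSemiring R]

noncomputable def lineRestriction (p v : σ → R) : MvPolynomial σ R →ₐ[R] R[X] :=
  aeval fun i => Polynomial.C (p i) + Polynomial.C (v i) * Polynomial.X

theorem eval_lineRestriction (p v : σ → R) (f : MvPolynomial σ R) (t : R) :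
    (lineRestriction p v f).eval t = eval (p + t • v) f := by
  induction f using MvPolynomial.induction_on with
  | C a => simp [lineRestriction]
  | add f g hf hg => simp [hf, hg]
  | mul_X f i hf => rw [map_mul, Polynomial.eval_mul, hf]; simp [lineRestriction, mul_comm t]

theorem _root_.Finsupp.prod_map_toMultiset {M : Type*} [CommMonoid M] (d : σ →₀ ℕ) (g : σ → M) :
    (d.toMultiset.map g).prod = d.prod fun i e => g i ^ e := by
  rw [Finsupp.toMultiset_map, Finsupp.prod_toMultiset,
    Finsupp.prod_mapDomain_index pow_zero pow_add]

/-- Writing the monomial as a product of `d.degree` linear factors `p i + t * v i`, the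
coefficient of `t ^ d.degree` is the product of their slopes. -/
theorem coeff_lineRestriction_monomial (p v : σ → R) (d : σ →₀ ℕ) (c : R) {N : ℕ}
    (hN : d.degree ≤ N) :
    (lineRestriction p v (monomial d c)).coeff N =
      if d.degree = N then eval v (monomial d c) else 0 := by
  set t := d.toMultiset.map fun i => Polynomial.C (p i) + Polynomial.C (v i) * Polynomial.X
  have ht : lineRestriction p v (monomial d c) = Polynomial.C c * t.prod := by
    rw [lineRestriction, aeval_monomial, Finsupp.prod_map_toMultiset, Polynomial.algebraMap_eq]
  have hlin : ∀ q ∈ t, q.natDegree ≤ 1 := by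
    simp only [t, Multiset.mem_map]
    rintro _ ⟨i, -, rfl⟩
    compute_degree
  have hcard : Multiset.card t * 1 = d.degree := by
    simp only [t, mul_one, Multiset.card_map, Finsupp.card_toMultiset]
    rfl
  rw [ht, Polynomial.coeff_C_mul]
  split_ifs with h
  · rw [← h, ← hcard, Polynomial.coeff_multiset_prod_of_natDegree_le _ _ hlin, eval_monomial]
    simp [t, Finsupp.prod_map_toMultiset]
  · have hdeg : t.prod.natDegree < N := calc
      t.prod.natDegree ≤ (t.map Polynomial.natDegree).sum := Polynomial.natDegree_multiset_prod_le t
      _ ≤ Multiset.card t * 1 := by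
        simpa using Multiset.sum_le_card_nsmul (t.map Polynomial.natDegree) 1 (by simpa using hlin)
      _ < N := hcard ▸ lt_of_le_of_ne hN h
    rw [Polynomial.coeff_eq_zero_of_natDegree_lt hdeg, mul_zero]

theorem coeff_lineRestriction (p v : σ → R) {f : MvPolynomial σ R} {N : ℕ}
    (hN : f.totalDegree ≤ N) :
    (lineRestriction p v f).coeff N = eval v (homogeneousComponent N f) := by
  classical
  conv_lhs => rw [f.as_sum, map_sum, Polynomial.finsetSum_coeff]
  rw [homogeneousComponent_apply, map_sum, Finset.sum_filter]
  exact Finset.sum_congr rfl fun d hd =>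
    coeff_lineRestriction_monomial p v d _ ((le_totalDegree hd).trans hN)

theorem homogeneousComponent_totalDegree_ne_zero {f : MvPolynomial σ R} (hf : f ≠ 0) :
    homogeneousComponent f.totalDegree f ≠ 0 := by
  obtain ⟨d, hd, hdeg⟩ := Finset.exists_mem_eq_sup f.support (support_nonempty.mpr hf)
    fun d => d.degree
  have htop : d.degree = f.totalDegree := hdeg.symm
  refine ne_of_apply_ne (coeff d) ?_
  rw [coeff_homogeneousComponent, if_pos htop, coeff_zero]
  exact mem_support_iff.mp hd

theorem eq_zero_of_eval_eq_zero_of_forall_exists_line {R : Type*} [CommRing R] [IsDomain R]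
    [Infinite R] {E : Set (σ → R)} (hE : ∀ v : σ → R, ∃ p, ∀ t : R, p + t • v ∈ E)
    {f : MvPolynomial σ R} (hf : ∀ x ∈ E, eval x f = 0) : f = 0 := by
  by_contra hf0
  refine homogeneousComponent_totalDegree_ne_zero hf0 (funext fun v => ?_)
  obtain ⟨p, hp⟩ := hE v
  have hline : lineRestriction p v f = 0 :=
    Polynomial.funext fun t => by rw [eval_lineRestriction, hf _ (hp t), Polynomial.eval_zero]
  rw [← coeff_lineRestriction p v le_rfl, hline, Polynomial.coeff_zero, map_zero]

end MvPolynomial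

theorem IsKakeya.exists_line {k : Type*} [Field k] {n : ℕ} (hn : 1 ≤ n) {E : Set (Fin n → k)}
    (hE : IsKakeya E) (v : Fin n → k) : ∃ p, ∀ t : k, p + t • v ∈ E := by
  by_cases hv : v = 0
  · obtain ⟨p, hp⟩ := hE (Pi.single ⟨0, hn⟩ 1) (by simp)
    exact ⟨p, fun t => by simpa [hv] using hp 0⟩
  · exact hE v hv

theorem kakeya_constructible_dense_general {k : Type*} [Field k] [IsAlgClosed k] {n : ℕ} (hn : 1 ≤ n)
    (E : Set (Fin n → k)) (hK : IsKakeya E) :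
    MvPolynomial.zeroLocus k (MvPolynomial.vanishingIdeal k E) = Set.univ := by
  have hbot : MvPolynomial.vanishingIdeal k E = ⊥ :=
    (Submodule.eq_bot_iff _).mpr fun f hf =>
      MvPolynomial.eq_zero_of_eval_eq_zero_of_forall_exists_line (hK.exists_line hn)
        (MvPolynomial.mem_vanishingIdeal_iff.mp hf)
  rw [hbot, MvPolynomial.zeroLocus_bot, Set.top_eq_univ]

/-- If `E ⊆ 𝔸ⁿ(k)` is a constructible Kakeya subset (`k` algebraically closed), then
`dim E = n`, i.e. the Zariski closure of `E` is all of `𝔸ⁿ`. -/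
theorem kakeya_constructible_dense {k : Type*} [Field k] [IsAlgClosed k] {n : ℕ} (hn : 1 ≤ n)
    (E : Set (Fin n → k)) (hE : IsConstructibleSet E) (hK : IsKakeya E) :
    MvPolynomial.zeroLocus k (MvPolynomial.vanishingIdeal k E) = Set.univ :=
  kakeya_constructible_dense_general hn E hK
end

section
/- For every integer d ≥ 3 there exist an irreducible polynomial g ∈ k[x₁,x₂,x₃] of degree d and two points R₁, R₂ ∈ V(g) ⊆ 𝔸³(k) such that {R₁, R₂} ∪ {x ∈ 𝔸³ : g(x) ≠ 0} is a Kakeya subset of 𝔸³(k). -/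
/-!
Take `g = x₀ x₁ᵉ - x₂ᵉ⁺¹` with `e = d - 1`, `R₁ = 0` and `R₂ = (1, 0, 0)`. As a polynomial in `x₀`
over `k[x₁, x₂]` it is linear with coprime coefficients, hence irreducible. For a direction `v`
with `g(v) ≠ 0`, homogeneity gives `g(t v) = tᵈ g(v)`, so the line through `R₁` works. If
`g(v) = 0` and `v₁ ≠ 0`, then `g(R₂ + t v) = tᵉ v₁ᵉ`, so the line through `R₂` works. Otherwise
`v₁ = v₂ = 0`, and the line through `(0, 0, 1)` lies in `{g = -1}`.
-/

open MvPolynomial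

theorem MvPolynomial.IsHomogeneous.eval_smul {σ R : Type*} [CommSemiring R]
    {φ : MvPolynomial σ R} {n : ℕ} (hφ : φ.IsHomogeneous n) (t : R) (x : σ → R) :
    eval (t • x) φ = t ^ n * eval x φ := by
  rw [eval_eq, eval_eq, Finset.mul_sum]
  refine Finset.sum_congr rfl fun d hd => ?_
  have hdeg : ∑ i ∈ d.support, d i = n := by
    simpa [Finsupp.weight_apply, Finsupp.sum] using hφ (mem_support_iff.mp hd)
  simp only [Pi.smul_apply, smul_eq_mul, mul_pow, Finset.prod_mul_distrib,
    Finset.prod_pow_eq_pow_sum, hdeg]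
  ring

theorem Prime.isRelPrime_pow_of_not_dvd {M : Type*} [CommMonoidWithZero M] [IsCancelMulZero M]
    {p b : M} (hp : Prime p) (h : ¬ p ∣ b) (m : ℕ) : IsRelPrime (p ^ m) b := by
  intro d hdp hdb
  obtain ⟨i, -, hd⟩ := (dvd_prime_pow hp m).mp hdp
  obtain rfl | hi := Nat.eq_zero_or_pos i
  · exact hd.symm.isUnit (by simp)
  · exact absurd ((dvd_pow_self p hi.ne').trans (hd.symm.dvd.trans hdb)) h

noncomputable def kakeyaCone (R : Type*) [CommRing R] (e : ℕ) : MvPolynomial (Fin 3) R :=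
  X 0 * X 1 ^ e - X 2 ^ (e + 1)

section kakeyaCone

variable {R : Type*} [CommRing R] (e : ℕ)

theorem eval_kakeyaCone (x : Fin 3 → R) :
    eval x (kakeyaCone R e) = x 0 * x 1 ^ e - x 2 ^ (e + 1) := by
  simp [kakeyaCone]

theorem isHomogeneous_kakeyaCone : (kakeyaCone R e).IsHomogeneous (e + 1) := by
  refine IsHomogeneous.sub ?_ (isHomogeneous_X_pow _ _)
  simpa [add_comm] using (isHomogeneous_X R 0).mul (isHomogeneous_X_pow (R := R) 1 e)

theorem totalDegree_kakeyaCone [Nontrivial R] : (kakeyaCone R e).totalDegree = e + 1 := by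
  refine (isHomogeneous_kakeyaCone e).totalDegree fun h => ?_
  have := congrArg (eval (Pi.single 2 1)) h
  simp [eval_kakeyaCone] at this

theorem finSuccEquiv_kakeyaCone :
    finSuccEquiv R 2 (kakeyaCone R e) =
      Polynomial.C (X 0 ^ e) * Polynomial.X + Polynomial.C (-(X 1 ^ (e + 1))) := by
  simp only [kakeyaCone, map_sub, map_mul, map_pow, finSuccEquiv_X_zero]
  rw [show (2 : Fin 3) = Fin.succ 1 from rfl, show (1 : Fin 3) = Fin.succ 0 from rfl,
    finSuccEquiv_X_succ, finSuccEquiv_X_succ]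
  simp only [Polynomial.C_neg, Polynomial.C_pow]
  ring

theorem irreducible_kakeyaCone [IsDomain R] : Irreducible (kakeyaCone R e) := by
  rw [← MulEquiv.irreducible_iff (finSuccEquiv R 2), finSuccEquiv_kakeyaCone]
  have hX : ¬ (X 0 : MvPolynomial (Fin 2) R) ∣ X 1 ^ (e + 1) := fun h =>
    absurd (X_dvd_X.mp (X_prime.dvd_of_dvd_pow h)) (by decide)
  exact Polynomial.irreducible_C_mul_X_add_C (pow_ne_zero _ (X_ne_zero 0))
    ((X_prime.isRelPrime_pow_of_not_dvd hX e).neg_right)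

theorem eval_single_zero_add_smul_kakeyaCone (t : R) (v : Fin 3 → R) :
    eval (Pi.single 0 1 + t • v) (kakeyaCone R e) =
      t ^ e * v 1 ^ e + t ^ (e + 1) * eval v (kakeyaCone R e) := by
  simp only [eval_kakeyaCone, Pi.add_apply, Pi.smul_apply, smul_eq_mul, Pi.single_eq_same, Pi.single_eq_of_ne (show (1 : Fin 3) ≠ 0 by decide),
    Pi.single_eq_of_ne (show (2 : Fin 3) ≠ 0 by decide), zero_add]
  ring

end kakeyaCone

theorem isKakeya_kakeyaCone {k : Type*} [Field k] {e : ℕ} (he : e ≠ 0) :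
    IsKakeya ({0, Pi.single 0 1} ∪ {x : Fin 3 → k | eval x (kakeyaCone k e) ≠ 0}) := by
  intro v _
  simp only [Set.mem_union, Set.mem_insert_iff, Set.mem_singleton_iff, Set.mem_ofPred_eq]
  by_cases hgv : eval v (kakeyaCone k e) = 0
  swap
  · refine ⟨0, fun t => ?_⟩
    rcases eq_or_ne t 0 with rfl | ht
    · simp
    · right
      rw [zero_add, (isHomogeneous_kakeyaCone e).eval_smul]
      exact mul_ne_zero (pow_ne_zero _ ht) hgv
  by_cases hv₁ : v 1 = 0
  · have hv₂ : v 2 = 0 := by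
      rw [eval_kakeyaCone, hv₁, zero_pow he, mul_zero, zero_sub, neg_eq_zero] at hgv
      exact pow_eq_zero_iff (Nat.succ_ne_zero e) |>.mp hgv
    refine ⟨Pi.single 2 1, fun t => Or.inr ?_⟩
    simp [eval_kakeyaCone, hv₁, hv₂, zero_pow he]
  · refine ⟨Pi.single 0 1, fun t => ?_⟩
    rcases eq_or_ne t 0 with rfl | ht
    · simp
    · right
      rw [eval_single_zero_add_smul_kakeyaCone, hgv, mul_zero, add_zero]
      exact mul_ne_zero (pow_ne_zero _ ht) (pow_ne_zero _ hv₁)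

theorem exists_kakeya_two_points_union_nonvanishing_general {k : Type*} [Field k]
    (d : ℕ) (hd : 3 ≤ d) :
    ∃ (g : MvPolynomial (Fin 3) k) (R₁ R₂ : Fin 3 → k),
      Irreducible g ∧ g.totalDegree = d ∧ R₁ ≠ R₂ ∧
      MvPolynomial.eval R₁ g = 0 ∧ MvPolynomial.eval R₂ g = 0 ∧
      IsKakeya ({R₁, R₂} ∪ {x : Fin 3 → k | MvPolynomial.eval x g ≠ 0}) := by
  obtain ⟨e, rfl⟩ : ∃ e, d = e + 1 := ⟨d - 1, by omega⟩
  have he : e ≠ 0 := by omega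
  refine ⟨kakeyaCone k e, 0, Pi.single 0 1, irreducible_kakeyaCone e, totalDegree_kakeyaCone e,
    (Pi.single_ne_zero_iff.mpr one_ne_zero).symm, ?_, ?_, isKakeya_kakeyaCone he⟩ <;>
    simp only [eval_kakeyaCone] <;> simp [zero_pow he]

/-- For every `d ≥ 3` there exist an irreducible polynomial `g ∈ k[x₁,x₂,x₃]` of degree `d`
and two points `R₁, R₂` on `V(g)` such that `{R₁, R₂} ∪ {g ≠ 0}` is a Kakeya subset of
`𝔸³(k)`. -/
theorem exists_kakeya_two_points_union_nonvanishing {k : Type*} [Field k] [IsAlgClosed k]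
    (d : ℕ) (hd : 3 ≤ d) :
    ∃ (g : MvPolynomial (Fin 3) k) (R₁ R₂ : Fin 3 → k),
      Irreducible g ∧ g.totalDegree = d ∧ R₁ ≠ R₂ ∧
      MvPolynomial.eval R₁ g = 0 ∧ MvPolynomial.eval R₂ g = 0 ∧
      IsKakeya ({R₁, R₂} ∪ {x : Fin 3 → k | MvPolynomial.eval x g ≠ 0}) :=
  exists_kakeya_two_points_union_nonvanishing_general d hd
end

section
/- For d ≥ 3 let g = y^{d−1}z − x^d ∈ k[x,y,z]. Then g is irreducible of degree d, and the set {(0,0,0), (0,0,1)} ∪ {(x,y,z) ∈ 𝔸³ : g(x,y,z) ≠ 0} is a Kakeya subset of 𝔸³(k). -/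
namespace MvPolynomial

theorem IsHomogeneous.eval_smul_s3 {σ R : Type*} [CommSemiring R] {φ : MvPolynomial σ R} {n : ℕ}
    (hφ : φ.IsHomogeneous n) (t : R) (v : σ → R) : eval (t • v) φ = t ^ n * eval v φ := by
  simp only [eval_eq, Finset.mul_sum]
  refine Finset.sum_congr rfl fun s hs => ?_
  rw [← hφ (mem_support_iff.mp hs), Finsupp.weight_apply]
  simp [Finsupp.sum, mul_pow, Finset.prod_mul_distrib, Finset.prod_pow_eq_pow_sum]
  ring

theorem isRelPrime_X_pow_X_pow {σ R : Type*} [CommRing R] [IsDomain R]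
    [UniqueFactorizationMonoid R] {i j : σ} (hij : i ≠ j)
    (m n : ℕ) : IsRelPrime (X i ^ m : MvPolynomial σ R) (X j ^ n) :=
  ((X_prime.irreducible.isRelPrime_iff_not_dvd).2 (X_dvd_X.not.2 hij)).pow

theorem add_smul_mem_union_of_eval_eq_pow_mul {σ R : Type*} [CommSemiring R] [NoZeroDivisors R]
    {φ : MvPolynomial σ R} {S : Set (σ → R)} {p v : σ → R} {m : ℕ} {c : R} (hp : p ∈ S)
    (hc : c ≠ 0) (hline : ∀ t, eval (p + t • v) φ = t ^ m * c) (t : R) :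
    p + t • v ∈ S ∪ {x | eval x φ ≠ 0} := by
  rcases eq_or_ne t 0 with rfl | ht
  · simpa using Or.inl hp
  · exact Or.inr (by rw [Set.mem_ofPred_eq, hline]; exact mul_ne_zero (pow_ne_zero m ht) hc)

variable (R : Type*) [CommRing R]

noncomputable def cuspidalCone (d : ℕ) : MvPolynomial (Fin 3) R := X 1 ^ (d - 1) * X 2 - X 0 ^ d

variable {R}

@[simp]
theorem eval_cuspidalCone (d : ℕ) (x : Fin 3 → R) :
    eval x (cuspidalCone R d) = x 1 ^ (d - 1) * x 2 - x 0 ^ d := by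
  simp [cuspidalCone]

-- `Fin.cycleRange 2` moves `z = X 2` to `X 0`, which `finSuccEquiv` turns into `Polynomial.X`.
theorem finSuccEquiv_rename_cuspidalCone (d : ℕ) :
    finSuccEquiv R 2 (rename (Fin.cycleRange 2) (cuspidalCone R d)) =
      Polynomial.C (X 1 ^ (d - 1)) * Polynomial.X + Polynomial.C (-X 0 ^ d) := by
  have h0 : Fin.cycleRange (2 : Fin 3) 0 = Fin.succ 0 := by decide
  have h1 : Fin.cycleRange (2 : Fin 3) 1 = Fin.succ 1 := by decide
  have h2 : Fin.cycleRange (2 : Fin 3) 2 = 0 := by decide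
  simp only [cuspidalCone, map_sub, map_mul, map_pow, rename_X, h0, h1, h2, finSuccEquiv_X_zero,
    finSuccEquiv_X_succ, Polynomial.C_neg]
  ring

theorem irreducible_cuspidalCone [IsDomain R] [UniqueFactorizationMonoid R] (d : ℕ) :
    Irreducible (cuspidalCone R d) := by
  rw [← MulEquiv.irreducible_iff ((renameEquiv R (Fin.cycleRange 2)).trans (finSuccEquiv R 2)),
    AlgEquiv.coe_trans, Function.comp_apply, renameEquiv_apply, finSuccEquiv_rename_cuspidalCone]
  exact Polynomial.irreducible_C_mul_X_add_C
    (pow_ne_zero _ (X_ne_zero 1)) (isRelPrime_X_pow_X_pow (by decide) _ _).neg_right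

theorem isHomogeneous_cuspidalCone {d : ℕ} (hd : 1 ≤ d) : (cuspidalCone R d).IsHomogeneous d := by
  obtain ⟨e, rfl⟩ := Nat.exists_eq_add_of_le' hd
  exact ((isHomogeneous_X_pow _ e).mul (isHomogeneous_X R 2)).sub (isHomogeneous_X_pow _ _)

theorem totalDegree_cuspidalCone [IsDomain R] [UniqueFactorizationMonoid R] {d : ℕ} (hd : 1 ≤ d) :
    (cuspidalCone R d).totalDegree = d :=
  (isHomogeneous_cuspidalCone hd).totalDegree (irreducible_cuspidalCone d).ne_zero

theorem eval_add_smul_cuspidalCone_of_eval_eq_zero {d : ℕ} (hd : 1 ≤ d) {v : Fin 3 → R}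
    (hv : eval v (cuspidalCone R d) = 0) (t : R) :
    eval (![0, 0, 1] + t • v) (cuspidalCone R d) = t ^ (d - 1) * v 1 ^ (d - 1) := by
  obtain ⟨e, rfl⟩ := Nat.exists_eq_add_of_le' hd
  simp only [eval_cuspidalCone, add_tsub_cancel_right] at hv ⊢
  simp only [Pi.add_apply, Pi.smul_apply, smul_eq_mul, Matrix.cons_val_zero, Matrix.cons_val_one,
    Matrix.cons_val, zero_add]
  linear_combination t ^ (e + 1) * hv

theorem eval_add_smul_cuspidalCone_of_apply_one_eq_zero [NoZeroDivisors R] {d : ℕ} (hd : 2 ≤ d)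
    {v : Fin 3 → R} (hv : eval v (cuspidalCone R d) = 0) (hv₁ : v 1 = 0) (t : R) :
    eval (![1, 0, 0] + t • v) (cuspidalCone R d) = -1 := by
  have hv₀ : v 0 = 0 := by
    rw [eval_cuspidalCone, hv₁, zero_pow (by omega), zero_mul, zero_sub, neg_eq_zero] at hv
    exact pow_eq_zero_iff (by omega) |>.1 hv
  simp only [eval_cuspidalCone, Pi.add_apply, Pi.smul_apply, hv₀, hv₁]
  simp [zero_pow (by omega : d - 1 ≠ 0)]

theorem isKakeya_cuspidalCone {k : Type*} [Field k] {d : ℕ} (hd : 2 ≤ d) :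
    IsKakeya (({![0, 0, 0], ![0, 0, 1]} : Set (Fin 3 → k)) ∪
      {x : Fin 3 → k | eval x (cuspidalCone k d) ≠ 0}) := by
  intro v _
  by_cases hv : eval v (cuspidalCone k d) = 0
  · by_cases hv₁ : v 1 = 0
    · exact ⟨![1, 0, 0], fun t => Or.inr <| by
        simp only [Set.mem_ofPred_eq, eval_add_smul_cuspidalCone_of_apply_one_eq_zero hd hv hv₁]
        exact neg_ne_zero.2 one_ne_zero⟩
    · exact ⟨![0, 0, 1], add_smul_mem_union_of_eval_eq_pow_mul (by simp)
        (pow_ne_zero _ hv₁) (eval_add_smul_cuspidalCone_of_eval_eq_zero (by omega) hv)⟩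
  · refine ⟨0, add_smul_mem_union_of_eval_eq_pow_mul (m := d)
      (by simp [← Matrix.cons_zero_zero, Matrix.zero_empty]) hv fun t => ?_⟩
    rw [zero_add, (isHomogeneous_cuspidalCone (by omega)).eval_smul_s3]

end MvPolynomial

open MvPolynomial in
theorem cuspidal_cone_two_points_kakeya_general {k : Type*} [Field k]
    (d : ℕ) (hd : 3 ≤ d)
    (g : MvPolynomial (Fin 3) k) (hg : g = X 1 ^ (d - 1) * X 2 - X 0 ^ d) :
    Irreducible g ∧ g.totalDegree = d ∧
      IsKakeya (({![0, 0, 0], ![0, 0, 1]} : Set (Fin 3 → k)) ∪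
        {x : Fin 3 → k | eval x g ≠ 0}) := by
  subst hg
  exact ⟨irreducible_cuspidalCone d, totalDegree_cuspidalCone (by omega),
    isKakeya_cuspidalCone (by omega)⟩

open MvPolynomial in
/-- For `d ≥ 3` let `g = y^(d-1) * z - x^d ∈ k[x,y,z]` (with `x = X 0`, `y = X 1`, `z = X 2`).
Then `g` is irreducible of degree `d`, and `{(0,0,0), (0,0,1)} ∪ {g ≠ 0}` is a Kakeya subset
of `𝔸³(k)`. -/
theorem cuspidal_cone_two_points_kakeya {k : Type*} [Field k] [IsAlgClosed k]
    (d : ℕ) (hd : 3 ≤ d)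
    (g : MvPolynomial (Fin 3) k) (hg : g = X 1 ^ (d - 1) * X 2 - X 0 ^ d) :
    Irreducible g ∧ g.totalDegree = d ∧
      IsKakeya (({![0, 0, 0], ![0, 0, 1]} : Set (Fin 3 → k)) ∪
        {x : Fin 3 → k | eval x g ≠ 0}) :=
  cuspidal_cone_two_points_kakeya_general d hd g hg
end

section
/- Let E = {R₁,…,R_s} ∪ {g ≠ 0} ⊆ 𝔸³(k) be a Kakeya subset, where g ∈ k[x₁,x₂,x₃] is irreducible of degree d ≥ 3, R₁,…,R_s ∈ V(g), and the curve at infinity C = V(G) ∩ V(x₀) is non-flexy and non-funny. Then s ≥ 2, i.e. one must add at least two points to {g ≠ 0} to obtain a Kakeya set. -/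
/-- The restriction of a polynomial `h` to the parametrized line `t ↦ p + t • w`,
as a polynomial in `t`. -/
noncomputable def lineEval {k : Type*} [Field k] {n : ℕ} (h : MvPolynomial (Fin n) k)
    (p w : Fin n → k) : Polynomial k :=
  MvPolynomial.aeval (fun i => Polynomial.C (p i) + Polynomial.C (w i) * Polynomial.X) h

/-- The projective plane curve defined by the homogeneous polynomial `h ∈ k[x₁,x₂,x₃]` has
multiplicity `m` at the projective point `[p]`:  every projective line through `[p]`
(parametrized as `t ↦ [p + t • w]` for `w` linearly independent from `p`) meets the curve
with intersection multiplicity at least `m` at `[p]`, and some line meets it with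
intersection multiplicity exactly `m`.  (The multiplicity of a point on a curve is the
minimum of the intersection multiplicities at that point with lines through it.) -/
def CurveMultAt {k : Type*} [Field k] (h : MvPolynomial (Fin 3) k) (p : Fin 3 → k)
    (m : ℕ) : Prop :=
  (∀ w : Fin 3 → k, LinearIndependent k ![p, w] → Polynomial.X ^ m ∣ lineEval h p w) ∧
  (∃ w : Fin 3 → k, LinearIndependent k ![p, w] ∧ ¬ Polynomial.X ^ (m + 1) ∣ lineEval h p w)

/-- A point of a plane curve is a smooth point when its multiplicity is `1`. -/
def CurveSmoothAt {k : Type*} [Field k] (h : MvPolynomial (Fin 3) k) (p : Fin 3 → k) : Prop :=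
  CurveMultAt h p 1

/-- A (smooth) point `[p]` of the plane curve `{h = 0}` is flexy when some line through
`[p]` meets the curve with intersection multiplicity at least `3` at `[p]`; for plane
curves at smooth points this is the condition `g₁ ∣ g₂` on the local expansion
`g = g₁ + g₂ + ⋯` of a local defining equation. -/
def FlexyAt {k : Type*} [Field k] (h : MvPolynomial (Fin 3) k) (p : Fin 3 → k) : Prop :=
  ∃ w : Fin 3 → k, LinearIndependent k ![p, w] ∧ Polynomial.X ^ 3 ∣ lineEval h p w

/-- A plane curve `{h = 0}` is non-flexy when not all of its smooth points are flexy. -/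
def NonFlexyCurve {k : Type*} [Field k] (h : MvPolynomial (Fin 3) k) : Prop :=
  ∃ p : Fin 3 → k, MvPolynomial.eval p h = 0 ∧ CurveSmoothAt h p ∧ ¬ FlexyAt h p

/-- An irreducible plane curve `{h = 0} ⊆ ℙ²` is funny if there is a point `[q] ∈ ℙ²` such
that for all smooth points `[p]` of the curve the line joining `[p]` and `[q]` is tangent
to the curve at `[p]` (i.e. has intersection multiplicity at least `2` there). -/
def FunnyCurve {k : Type*} [Field k] (h : MvPolynomial (Fin 3) k) : Prop :=
  ∃ q : Fin 3 → k, q ≠ 0 ∧ ∀ p : Fin 3 → k, MvPolynomial.eval p h = 0 → CurveSmoothAt h p →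
    LinearIndependent k ![p, q] → Polynomial.X ^ 2 ∣ lineEval h p q



private lemma eval_aeval_poly {k : Type*} [CommSemiring k] {n : ℕ}
    (f : Fin n → Polynomial k) (G : MvPolynomial (Fin n) k) (t : k) :
    Polynomial.eval t (MvPolynomial.aeval f G) =
      MvPolynomial.eval (fun i => Polynomial.eval t (f i)) G := by
  induction G using MvPolynomial.induction_on with
  | C a => simp
  | add p q hp hq => simp [hp, hq]
  | mul_X p i hp => simp [hp]

private lemma eval_aeval_mv {k : Type*} [CommSemiring k] {m n : ℕ}
    (f : Fin m → MvPolynomial (Fin n) k) (G : MvPolynomial (Fin m) k) (x : Fin n → k) :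
    MvPolynomial.eval x (MvPolynomial.aeval f G) =
      MvPolynomial.eval (fun i => MvPolynomial.eval x (f i)) G := by
  induction G using MvPolynomial.induction_on with
  | C a => simp
  | add p q hp hq => simp only [map_add]; rw [hp, hq]
  | mul_X p i hp => simp only [map_mul, MvPolynomial.aeval_X, MvPolynomial.eval_X]; rw [hp]

private lemma eval_smul_homog {k : Type*} [CommSemiring k] {n d : ℕ}
    {G : MvPolynomial (Fin n) k} (hG : G.IsHomogeneous d) (c : k) (y : Fin n → k) :
    MvPolynomial.eval (c • y) G = c ^ d * MvPolynomial.eval y G := by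
  rw [MvPolynomial.eval_eq', MvPolynomial.eval_eq', Finset.mul_sum]
  refine Finset.sum_congr rfl fun m hm => ?_
  have hdm : ∑ i, m i = d := by
    have h1 := hG (MvPolynomial.mem_support_iff.mp hm)
    rw [Finsupp.weight_apply] at h1
    rw [← h1, Finsupp.sum]
    rw [Finset.sum_subset (Finset.subset_univ m.support)]
    · simp
    · intro i _ hi
      simpa using Finsupp.notMem_support_iff.mp hi
  have : ∀ i, (c • y) i ^ m i = c ^ m i * y i ^ m i := by
    intro i; rw [Pi.smul_apply, smul_eq_mul, mul_pow]
  rw [Finset.prod_congr rfl fun i _ => this i, Finset.prod_mul_distrib,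
    Finset.prod_pow_eq_pow_sum, hdm]
  ring

open Polynomial in
private lemma poly_structure {k : Type*} [Field k] [IsAlgClosed k] {Φ : Polynomial k}
    (hΦ : Φ ≠ 0) (huniq : ∀ a b : k, Φ.eval a = 0 → Φ.eval b = 0 → a = b) :
    ∃ c a : k, c ≠ 0 ∧ (Φ.natDegree ≠ 0 → Φ.eval a = 0) ∧
      ∀ t, Φ.eval t = c * (t - a) ^ Φ.natDegree := by
  refine ⟨Φ.leadingCoeff, ?_⟩
  by_cases hm : Φ.natDegree = 0
  · obtain ⟨c, rfl⟩ := Polynomial.natDegree_eq_zero.mp hm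
    exact ⟨0, by simpa using hΦ, fun hc => absurd hm hc.elim, fun t => by simp [hm]⟩
  · obtain ⟨a, ha⟩ := IsAlgClosed.exists_root Φ (by
      intro hdeg
      exact hm (Polynomial.natDegree_eq_zero_iff_degree_le_zero.mpr (le_of_eq hdeg)))
    have hsplits : Φ.roots.card = Φ.natDegree :=
      (Polynomial.splits_iff_card_roots).mp (IsAlgClosed.splits Φ)
    have hrepl : Φ.roots = Multiset.replicate Φ.natDegree a := by
      rw [Multiset.eq_replicate]
      refine ⟨hsplits, fun b hb => ?_⟩
      exact huniq b a ((Polynomial.mem_roots hΦ).mp hb) ha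
    have hΦeq : Polynomial.C Φ.leadingCoeff * (X - Polynomial.C a) ^ Φ.natDegree = Φ := by
      have := Polynomial.C_leadingCoeff_mul_prod_multiset_X_sub_C hsplits
      rwa [hrepl, Multiset.map_replicate, Multiset.prod_replicate] at this
    refine ⟨a, Polynomial.leadingCoeff_ne_zero.mpr hΦ, fun _ => ha, fun t => ?_⟩
    have h2 := congrArg (Polynomial.eval t) hΦeq
    simpa using h2.symm

open MvPolynomial in
/-- Let `E = {R₁,…,R_s} ∪ {g ≠ 0} ⊆ 𝔸³(k)` be a Kakeya subset, where `g` is irreducible of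
degree `d ≥ 3`, the `Rᵢ` lie on `V(g)`, and the curve at infinity
`C = V(G) ∩ V(x₀)` (whose affine cone is the zero set of `h = G(0,x₁,x₂,x₃)`, `G` the
homogenization of `g`) is non-flexy and non-funny.  Then `s ≥ 2`: one must add at least
two points to `{g ≠ 0}` to obtain a Kakeya set. -/
theorem kakeya_type_one_needs_two_points {k : Type*} [Field k] [IsAlgClosed k]
    {d s : ℕ} (hd : 3 ≤ d)
    (g : MvPolynomial (Fin 3) k) (hgirr : Irreducible g) (hgdeg : g.totalDegree = d)
    (R : Fin s → (Fin 3 → k)) (hR : ∀ i, eval (R i) g = 0)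
    (hK : IsKakeya (Set.range R ∪ {x : Fin 3 → k | eval x g ≠ 0}))
    (G : MvPolynomial (Fin 4) k) (hGhom : G.IsHomogeneous d)
    (hGg : ∀ x : Fin 3 → k, eval (Fin.cons 1 x) G = eval x g)
    (h : MvPolynomial (Fin 3) k) (hh : h = aeval (Fin.cons 0 X) G)
    (hnf : NonFlexyCurve h) (hnfun : ¬ FunnyCurve h) :
    2 ≤ s := by
  by_contra hs
  push_neg at hs
  have hs1 : s ≤ 1 := by omega
  have hd0 : d ≠ 0 := by omega
  have hRsub : ∀ i j : Fin s, R i = R j := by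
    intro i j
    have hi := i.isLt; have hj := j.isLt
    have : i = j := Fin.ext (by omega)
    rw [this]
  obtain ⟨p₀, hp₀h, hp₀s, hp₀nf⟩ := hnf
  obtain ⟨w₀, hw₀li, hw₀nd⟩ := hp₀s.2
  have hne : h ≠ 0 := by
    intro h0
    exact hw₀nd (by rw [h0]; simp [lineEval])
  have hp₀ne : p₀ ≠ 0 := by
    have := hw₀li.ne_zero 0
    simpa using this
  -- evaluation of lineEval
  have hline : ∀ (g' : MvPolynomial (Fin 3) k) (q w : Fin 3 → k) (t : k),
      Polynomial.eval t (lineEval g' q w) = eval (fun i => q i + t * w i) g' := by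
    intro g' q w t
    rw [lineEval, eval_aeval_poly]
    have harg : (fun i => Polynomial.eval t (Polynomial.C (q i) + Polynomial.C (w i) * Polynomial.X))
        = fun i => q i + t * w i := by
      funext i
      simp only [Polynomial.eval_add, Polynomial.eval_mul, Polynomial.eval_C, Polynomial.eval_X]
      ring
    rw [harg]
  -- h at Fin.cons 0
  have hcons0 : ∀ x : Fin 3 → k, eval x h = eval (Fin.cons 0 x) G := by
    intro x
    rw [hh, eval_aeval_mv]
    have harg : (fun i => eval x ((Fin.cons 0 X : Fin 4 → MvPolynomial (Fin 3) k) i))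
        = Fin.cons (0 : k) x := by
      funext i
      refine Fin.cases ?_ ?_ i <;> simp
    rw [harg]
  -- scaling for h
  have hsmulh : ∀ (c : k) (x : Fin 3 → k), eval (c • x) h = c ^ d * eval x h := by
    intro c x
    rw [hcons0, hcons0]
    have hfc : (Fin.cons (0 : k) (c • x) : Fin 4 → k) = c • (Fin.cons (0 : k) x : Fin 4 → k) := by
      funext i
      refine Fin.cases ?_ ?_ i <;> simp
    rw [hfc, eval_smul_homog hGhom]
  have hh0 : eval (0 : Fin 3 → k) h = 0 := by
    have := hsmulh 0 0
    rw [smul_zero] at this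
    rw [this, zero_pow hd0, zero_mul]
  -- Fact 4
  have hmain : ∀ (q v : Fin 3 → k) (t : k), t ≠ 0 →
      eval (fun i => q i + t * v i) g
        = t ^ d * eval (Fin.cons t⁻¹ (fun i => v i + t⁻¹ * q i)) G := by
    intro q v t ht
    rw [← hGg]
    have hfc : (Fin.cons (1 : k) (fun i => q i + t * v i) : Fin 4 → k)
        = t • (Fin.cons t⁻¹ (fun i => v i + t⁻¹ * q i) : Fin 4 → k) := by
      funext i
      refine Fin.cases ?_ ?_ i
      · simp only [Fin.cons_zero, Pi.smul_apply, smul_eq_mul]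
        rw [mul_inv_cancel₀ ht]
      · intro j
        simp only [Fin.cons_succ, Pi.smul_apply, smul_eq_mul]
        rw [mul_add, ← mul_assoc, mul_inv_cancel₀ ht, one_mul, add_comm]
    rw [hfc, eval_smul_homog hGhom]
  -- structure of lines in E
  have key : ∀ v : Fin 3 → k, v ≠ 0 → ∃ (q : Fin 3 → k) (c : k) (m : ℕ),
      c ≠ 0 ∧ (m ≠ 0 → q ∈ Set.range R) ∧
      ∀ t : k, eval (fun i => q i + t * v i) g = c * t ^ m := by
    intro v hv
    obtain ⟨p, hp⟩ := hK v hv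
    set Φ := lineEval g p v with hΦdef
    have hroot_mem : ∀ t : k, Φ.eval t = 0 → (p + t • v) ∈ Set.range R := by
      intro t ht
      rcases hp t with hmem | hmem
      · exact hmem
      · exfalso
        apply hmem
        rw [hline] at ht
        have : (fun i => p i + t * v i) = p + t • v := by
          funext i; simp
        rwa [this] at ht
    have hinj : ∀ a b : k, p + a • v = p + b • v → a = b := by
      intro a b hab
      have h1 : (a - b) • v = 0 := by
        have := add_left_cancel hab
        rw [sub_smul, this, sub_self]
      rcases smul_eq_zero.mp h1 with h2 | h2
      · exact sub_eq_zero.mp h2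
      · exact absurd h2 hv
    have hΦne : Φ ≠ 0 := by
      intro h0
      obtain ⟨i, hi⟩ := hroot_mem 0 (by rw [h0]; simp)
      obtain ⟨j, hj⟩ := hroot_mem 1 (by rw [h0]; simp)
      have : p + (0 : k) • v = p + (1 : k) • v := by
        rw [← hi, ← hj, hRsub i j]
      exact one_ne_zero (hinj 1 0 this.symm)
    have huniq : ∀ a b : k, Φ.eval a = 0 → Φ.eval b = 0 → a = b := by
      intro a b ha hb
      obtain ⟨i, hi⟩ := hroot_mem a ha
      obtain ⟨j, hj⟩ := hroot_mem b hb
      exact hinj a b (by rw [← hi, ← hj, hRsub i j])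
    obtain ⟨c, a, hc, haroot, hform⟩ := poly_structure hΦne huniq
    refine ⟨p + a • v, c, Φ.natDegree, hc, fun hm => hroot_mem a (haroot hm), fun t => ?_⟩
    have h1 := hform (a + t)
    rw [hline] at h1
    have hfun : (fun i => (p + a • v) i + t * v i) = (fun i => p i + (a + t) * v i) := by
      funext i
      simp
      ring
    rw [hfun, h1]
    simp
  -- pinning the degree and constant
  have pin : ∀ (v : Fin 3 → k), eval v h ≠ 0 → ∀ (q : Fin 3 → k) (c : k) (m : ℕ), c ≠ 0 →
      (∀ t : k, eval (fun i => q i + t * v i) g = c * t ^ m) → m = d ∧ c = eval v h := by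
    intro v hv q c m hc hlin
    set γ : Polynomial k := MvPolynomial.aeval
      (Fin.cons Polynomial.X (fun i => Polynomial.C (v i) + Polynomial.X * Polynomial.C (q i))) G
      with hγdef
    have hγeval : ∀ s : k, γ.eval s = eval (Fin.cons s (fun i => v i + s * q i)) G := by
      intro t
      rw [hγdef, eval_aeval_poly]
      have harg : (fun i => Polynomial.eval t ((Fin.cons Polynomial.X
            (fun i => Polynomial.C (v i) + Polynomial.X * Polynomial.C (q i))
            : Fin 4 → Polynomial k) i))
          = Fin.cons t (fun i => v i + t * q i) := by
        funext i
        refine Fin.cases ?_ ?_ i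
        · simp only [Fin.cons_zero, Polynomial.eval_X]
        · intro j
          simp only [Fin.cons_succ, Polynomial.eval_add, Polynomial.eval_mul,
            Polynomial.eval_C, Polynomial.eval_X]
      rw [harg]
    have hγ0 : γ.eval 0 = eval v h := by
      rw [hγeval, hcons0]
      have harg : (Fin.cons (0 : k) (fun i => v i + 0 * q i) : Fin 4 → k)
          = Fin.cons (0 : k) v := by
        funext i
        refine Fin.cases ?_ ?_ i <;> simp
      rw [harg]
    have hkey : ∀ t : k, t ≠ 0 → t ^ m * γ.eval t = c * t ^ d := by
      intro t ht
      have h4 := hmain q v t⁻¹ (inv_ne_zero ht)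
      rw [hlin, inv_inv] at h4
      rw [← hγeval] at h4
      have htm : (t⁻¹) ^ m = (t ^ m)⁻¹ := by rw [inv_pow]
      have htd : (t⁻¹) ^ d = (t ^ d)⁻¹ := by rw [inv_pow]
      rw [htm, htd] at h4
      field_simp at h4
      linear_combination -h4
    have hpoly : Polynomial.X ^ m * γ = Polynomial.C c * Polynomial.X ^ d := by
      apply Polynomial.eq_of_infinite_eval_eq
      apply Set.Infinite.mono (s := {x : k | x ≠ 0})
      · intro t ht
        simp only [Set.mem_setOf_eq, Polynomial.eval_mul, Polynomial.eval_pow,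
          Polynomial.eval_X, Polynomial.eval_C]
        exact hkey t ht
      · have : ({x : k | x ≠ 0}) = ({0} : Set k)ᶜ := by ext; simp
        rw [this]
        exact (Set.finite_singleton 0).infinite_compl
    have hL : (Polynomial.X ^ m * γ).coeff m = γ.coeff 0 := by
      simpa using Polynomial.coeff_X_pow_mul γ m 0
    have hcoeff := congrArg (fun P => Polynomial.coeff P m) hpoly
    rw [hL, Polynomial.coeff_C_mul, Polynomial.coeff_X_pow,
      Polynomial.coeff_zero_eq_eval_zero, hγ0] at hcoeff
    by_cases hmd : m = d
    · rw [if_pos hmd, mul_one] at hcoeff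
      exact ⟨hmd, hcoeff.symm⟩
    · rw [if_neg hmd, mul_zero] at hcoeff
      exact absurd hcoeff hv
  -- there is a direction off the curve
  have hexv : ∃ v : Fin 3 → k, eval v h ≠ 0 := by
    by_contra hno
    push_neg at hno
    exact hne (MvPolynomial.funext fun x => by simp [hno x])
  obtain ⟨v₀, hv₀⟩ := hexv
  have hvne0 : ∀ v : Fin 3 → k, eval v h ≠ 0 → v ≠ 0 := by
    intro v hv hv0
    exact hv (hv0 ▸ hh0)
  obtain ⟨q₀, c₀, m₀, hc₀, hq₀mem, hq₀⟩ := key v₀ (hvne0 v₀ hv₀)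
  obtain ⟨hm₀, -⟩ := pin v₀ hv₀ q₀ c₀ m₀ hc₀ hq₀
  obtain ⟨i₀, hi₀⟩ := hq₀mem (by omega)
  -- cone property and f = h
  have hfh : ∀ x : Fin 3 → k, eval (fun i => q₀ i + x i) g = eval x h := by
    have hcone : ∀ v : Fin 3 → k, eval v h ≠ 0 →
        eval (fun i => q₀ i + v i) g = eval v h := by
      intro v hv
      obtain ⟨q, c, m, hc, hmem, hq⟩ := key v (hvne0 v hv)
      obtain ⟨hm, hcval⟩ := pin v hv q c m hc hq
      obtain ⟨i, hi⟩ := hmem (by omega)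
      have hqq₀ : q = q₀ := by rw [← hi, ← hi₀, hRsub i i₀]
      have := hq 1
      rw [hqq₀, hcval, one_pow, mul_one] at this
      simpa using this
    set f : MvPolynomial (Fin 3) k :=
      MvPolynomial.aeval (fun i => (MvPolynomial.X i : MvPolynomial (Fin 3) k)
        + MvPolynomial.C (q₀ i)) g with hfdef
    have hfe : ∀ x : Fin 3 → k, eval x f = eval (fun i => q₀ i + x i) g := by
      intro x
      rw [hfdef, eval_aeval_mv]
      have harg : (fun i => eval x ((MvPolynomial.X i : MvPolynomial (Fin 3) k)
          + MvPolynomial.C (q₀ i))) = fun i => q₀ i + x i := by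
        funext i; simp [add_comm]
      rw [harg]
    have hzero : (f - h) * h = 0 := by
      apply MvPolynomial.funext
      intro x
      rw [map_mul, map_sub, map_zero]
      by_cases hx : eval x h = 0
      · rw [hx, mul_zero]
      · rw [hfe, hcone x hx, sub_self, zero_mul]
    have hfh' : f = h := by
      rcases mul_eq_zero.mp hzero with h1 | h2
      · exact sub_eq_zero.mp h1
      · exact absurd h2 hne
    intro x
    rw [← hfe, hfh']
  -- the direction p₀ on the curve
  obtain ⟨q₁, c₁, m₁, hc₁, hmem₁, hq₁⟩ := key p₀ hp₀ne
  have hm₁0 : m₁ = 0 := by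
    by_contra hm
    obtain ⟨i, hi⟩ := hmem₁ hm
    have hq₁q₀ : q₁ = q₀ := by rw [← hi, ← hi₀, hRsub i i₀]
    have h1 := hq₁ 1
    rw [hq₁q₀] at h1
    have h2 : eval (fun i => q₀ i + 1 * p₀ i) g = eval p₀ h := by
      rw [show (fun i => q₀ i + 1 * p₀ i) = (fun i => q₀ i + p₀ i) by funext i; ring_nf]
      exact hfh p₀
    rw [h2, hp₀h] at h1
    simp at h1
    exact hc₁ h1.symm
  set u : Fin 3 → k := fun i => q₁ i - q₀ i with hudef
  have hupt : ∀ t : k, eval (fun i => u i + t * p₀ i) h = c₁ := by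
    intro t
    rw [← hfh]
    have : (fun i => q₀ i + (u i + t * p₀ i)) = (fun i => q₁ i + t * p₀ i) := by
      funext i
      simp [hudef]
      ring
    rw [this, hq₁ t, hm₁0, pow_zero, mul_one]
  apply hp₀nf
  refine ⟨u, ?_, ?_⟩
  · rw [LinearIndependent.pair_iff]
    intro a b hab
    by_cases hb : b = 0
    · subst hb
      rw [zero_smul, add_zero] at hab
      rcases smul_eq_zero.mp hab with h1 | h1
      · exact ⟨h1, rfl⟩
      · exact absurd h1 hp₀ne
    · exfalso
      have hu : u = (-(b⁻¹ * a)) • p₀ := by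
        have h1 : b • u = -(a • p₀) := by
          rw [eq_neg_iff_add_eq_zero, add_comm]
          exact hab
        calc u = b⁻¹ • (b • u) := by rw [smul_smul, inv_mul_cancel₀ hb, one_smul]
        _ = (-(b⁻¹ * a)) • p₀ := by rw [h1, smul_neg, smul_smul, neg_smul]
      have h2 := hupt 0
      rw [show (fun i => u i + (0:k) * p₀ i) = ((-(b⁻¹ * a)) • p₀ : Fin 3 → k) by
        funext i; rw [hu]; simp] at h2
      rw [hsmulh, hp₀h, mul_zero] at h2
      exact hc₁ h2.symm
  · have hflex : ∀ t : k, eval (fun i => p₀ i + t * u i) h = c₁ * t ^ d := by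
      intro t
      by_cases ht : t = 0
      · subst ht
        rw [show (fun i => p₀ i + (0:k) * u i) = p₀ by funext i; simp]
        rw [hp₀h, zero_pow hd0, mul_zero]
      · have hfc : (fun i => p₀ i + t * u i) = t • (fun i => u i + t⁻¹ * p₀ i) := by
          funext i
          simp only [Pi.smul_apply, smul_eq_mul]
          field_simp
          ring
        rw [hfc, hsmulh, hupt t⁻¹]
        ring
    have hlineq : lineEval h p₀ u = Polynomial.C c₁ * Polynomial.X ^ d := by
      apply Polynomial.funext
      intro t
      rw [hline]
      simp [hflex t]
    rw [hlineq]
    exact Dvd.dvd.mul_left (pow_dvd_pow Polynomial.X hd) _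
end

section
/- Let C = V(G) ⊆ ℙ² ≅ V(x₀) be an irreducible curve with homogeneous defining polynomial G ∈ k[x₁,x₂,x₃], let X = V(G) ⊆ ℙ³ be the cone over C with vertex v = [1:0:0:0], and let p be a smooth non-flexy point of C. Then the line joining p and v is the unique line l ⊆ ℙ³ through p with I_p(l, X) ≥ 3. -/
/-!
The cone's equation does not involve `x₀`, so along the line through `(0, p)` with direction
`w = (w₀, w')` it restricts to `G` along the line through `p` with direction `w'`.
If `w'` is independent of `p`, that is a line of `ℙ²` through the non-flex `p`, so the contact
order is below `3`, and the vertex is not on the line. Otherwise `w' = c • p`, the line passes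
through the vertex, and it lies on the cone because `G (p + t c p) = (1 + t c) ^ d G p = 0`.
-/

theorem MvPolynomial.IsHomogeneous.aeval_mul {R S σ : Type*} [CommSemiring R] [CommSemiring S]
    [Algebra R S] [Fintype σ] {G : MvPolynomial σ R} {d : ℕ} (hG : G.IsHomogeneous d)
    (r : S) (f : σ → S) :
    MvPolynomial.aeval (fun i => r * f i) G = r ^ d * MvPolynomial.aeval f G := by
  rw [aeval_def, aeval_def, eval₂_eq', eval₂_eq', Finset.mul_sum]
  refine Finset.sum_congr rfl fun m hm => ?_
  have hdeg : ∑ i, m i = d := by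
    simpa [Finsupp.weight_apply, Finsupp.sum_fintype] using hG (mem_support_iff.mp hm)
  simp only [mul_pow, Finset.prod_mul_distrib, Finset.prod_pow_eq_pow_sum, hdeg]
  ring

section

variable {k : Type*} [Field k] {n : ℕ}

open MvPolynomial

theorem lineEval_rename_succ (G : MvPolynomial (Fin n) k) (q w : Fin (n + 1) → k) :
    lineEval (rename Fin.succ G) q w = lineEval G (Fin.tail q) (Fin.tail w) := by
  simp only [lineEval, aeval_rename]
  rfl

theorem lineEval_smul_self_eq_zero {G : MvPolynomial (Fin n) k} {d : ℕ}
    (hG : G.IsHomogeneous d) {p : Fin n → k} (hp : eval p G = 0) (c : k) :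
    lineEval G p (c • p) = 0 := by
  have hline : (fun i => Polynomial.C (p i) + Polynomial.C ((c • p) i) * Polynomial.X) =
      fun i => (1 + Polynomial.C c * Polynomial.X) * Polynomial.C (p i) := by
    funext i
    simp only [Pi.smul_apply, smul_eq_mul, map_mul]
    ring
  have hconst : aeval (fun i => Polynomial.C (p i)) G = Polynomial.C (eval p G) := by
    rw [← eval₂_id, eval₂_comp_left]
    rfl
  rw [lineEval, hline, hG.aeval_mul, hconst, hp, map_zero, mul_zero]

theorem cons_one_zero_mem_span_pair_iff {p : Fin n → k} {w : Fin (n + 1) → k}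
    (hw : LinearIndependent k ![(Fin.cons 0 p : Fin (n + 1) → k), w]) :
    (Fin.cons 1 0 : Fin (n + 1) → k) ∈ Submodule.span k {Fin.cons 0 p, w} ↔
      ∃ c : k, c • p = Fin.tail w := by
  obtain ⟨a, v, rfl⟩ : ∃ a v, w = Fin.cons a v := ⟨_, _, (Fin.cons_self_tail w).symm⟩
  simp only [Submodule.mem_span_pair, Fin.tail_cons]
  constructor
  · rintro ⟨x, y, h⟩
    have hhead : y * a = 1 := by simpa using congrFun h 0
    have htail : x • p + y • v = 0 := funext fun i => by simpa using congrFun h i.succ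
    have hy : y ≠ 0 := left_ne_zero_of_mul_eq_one hhead
    refine ⟨-(x / y), funext fun i => ?_⟩
    have hi := congrFun htail i
    simp only [Pi.add_apply, Pi.smul_apply, smul_eq_mul, Pi.zero_apply] at hi ⊢
    field_simp
    linear_combination -hi
  · rintro ⟨c, rfl⟩
    have ha : a ≠ 0 := by
      rintro rfl
      have := LinearIndependent.pair_iff.mp hw c (-1) <| funext fun i => by
        refine Fin.cases ?_ (fun j => ?_) i <;> simp
      simp at this
    refine ⟨-(c / a), a⁻¹, funext fun i => Fin.cases ?_ (fun j => ?_) i⟩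
    · simp [ha]
    · simp only [Pi.add_apply, Pi.smul_apply, Fin.cons_succ, smul_eq_mul, Pi.zero_apply]
      field_simp
      ring

end

open MvPolynomial in
theorem unique_line_with_contact_three_on_cone_general {k : Type*} [Field k]
    {d : ℕ} (G : MvPolynomial (Fin 3) k) (hhom : G.IsHomogeneous d)
    (p : Fin 3 → k) (hp0 : p ≠ 0) (hpC : eval p G = 0)
    (hnfl : ¬ FlexyAt G p) :
    ∀ w : Fin 4 → k, LinearIndependent k ![(Fin.cons 0 p : Fin 4 → k), w] →
      (Polynomial.X ^ 3 ∣ lineEval (rename Fin.succ G) (Fin.cons 0 p) w ↔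
        (Fin.cons 1 0 : Fin 4 → k) ∈
          Submodule.span k {(Fin.cons 0 p : Fin 4 → k), w}) := by
  intro w hw
  rw [lineEval_rename_succ, Fin.tail_cons, cons_one_zero_mem_span_pair_iff hw]
  by_cases hvertex : ∃ c : k, c • p = Fin.tail w
  · obtain ⟨c, hc⟩ := hvertex
    rw [← hc, lineEval_smul_self_eq_zero hhom hpC]
    exact iff_of_true (dvd_zero _) ⟨c, rfl⟩
  · have hli : LinearIndependent k ![p, Fin.tail w] := by
      simpa [LinearIndependent.pair_iff' hp0] using hvertex
    exact iff_of_false (fun h3 => hnfl ⟨_, hli, h3⟩) hvertex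

open MvPolynomial in
/-- Let `C = V(G) ⊆ ℙ² ≅ V(x₀)` be an irreducible curve with homogeneous defining
polynomial `G ∈ k[x₁,x₂,x₃]`, let `X = V(G) ⊆ ℙ³` be the cone over `C` with vertex
`v = [1:0:0:0]` (defined by `G` viewed as a polynomial on `ℙ³` not involving `x₀`, via
`rename Fin.succ`), and let `[p]` be a smooth non-flexy point of `C`.  Then the line
joining `[p]` and `v` is the unique line `l ⊆ ℙ³` through `[p]` with `I_p(l, X) ≥ 3`:
for any line through `[0 : p]` in `ℙ³`, parametrized as `t ↦ [(0,p) + t • w]`, the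
intersection multiplicity with `X` at `[0 : p]` is at least `3` if and only if the line
passes through the vertex, i.e. `(1,0,0,0) ∈ span {(0,p), w}`. -/
theorem unique_line_with_contact_three_on_cone {k : Type*} [Field k] [IsAlgClosed k]
    {d : ℕ} (G : MvPolynomial (Fin 3) k) (hhom : G.IsHomogeneous d)
    (hirr : (MvPolynomial.vanishingIdeal k
      {x : Fin 3 → k | eval x G = 0}).IsPrime)
    (p : Fin 3 → k) (hp0 : p ≠ 0) (hpC : eval p G = 0)
    (hsm : CurveSmoothAt G p) (hnfl : ¬ FlexyAt G p) :
    ∀ w : Fin 4 → k, LinearIndependent k ![(Fin.cons 0 p : Fin 4 → k), w] →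
      (Polynomial.X ^ 3 ∣ lineEval (rename Fin.succ G) (Fin.cons 0 p) w ↔
        (Fin.cons 1 0 : Fin 4 → k) ∈
          Submodule.span k {(Fin.cons 0 p : Fin 4 → k), w}) :=
  unique_line_with_contact_three_on_cone_general G hhom p hp0 hpC hnfl
end

section
/- Let k be a field of characteristic ≠ 2 and let X = V(a₁ + b² − c₁²,…,a_{n−1} + b² − c_{n−1}²) ⊆ 𝔸^{2n−1} with coordinates (a₁,…,a_{n−1}, b, c₁,…,c_{n−1}), together with the projection π : X → 𝔸ⁿ, (a₁,…,a_{n−1},b,c₁,…,c_{n−1}) ↦ (a₁,…,a_{n−1},b). Then for every direction v = [α₁:…:α_{n−1}:1] (i.e. every direction whose last coordinate is nonzero), the parametrized line t ↦ (α₁t + α₁²/4, …, α_{n−1}t + α_{n−1}²/4, t, t + α₁/2, …, t + α_{n−1}/2) is contained in X and its image under π is a line in 𝔸ⁿ with direction v; in particular π is a Kakeya cover. -/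
/-- Let `k` be a field of characteristic `≠ 2`, let
`X = V(a₁ + b² - c₁², …, a_{n-1} + b² - c_{n-1}²) ⊆ 𝔸^{2n-1}` (with `m = n - 1`, points of
`𝔸^{2n-1}` written as triples `(a, b, c)` with `a, c ∈ k^m`, `b ∈ k`), together with the
projection `π : (a, b, c) ↦ (a, b)`.  Then for every direction `v = [α : 1]` (and, as the
second clause states, for every direction `v` whose last coordinate is nonzero) the
parametrized line `t ↦ (αᵢ t + αᵢ²/4, t, t + αᵢ/2)` is contained in `X` and its image
under `π` is a line in `𝔸ⁿ` with direction `v`; in particular `π` is a Kakeya cover (the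
set of good directions `{v : v.2 ≠ 0}` is a nonempty Zariski-open set of directions). -/
theorem squares_example_is_kakeya_cover {k : Type*} [Field k] (h2 : (2 : k) ≠ 0) (m : ℕ)
    (X : Set ((Fin m → k) × k × (Fin m → k)))
    (hX : X = {x | ∀ i : Fin m, x.1 i + x.2.1 ^ 2 - x.2.2 i ^ 2 = 0})
    (π : ((Fin m → k) × k × (Fin m → k)) → (Fin m → k) × k)
    (hπ : π = fun x => (x.1, x.2.1)) :
    (∀ α : Fin m → k,
      (∀ t : k, ((fun i => α i * t + α i ^ 2 / 4, t, fun i => t + α i / 2) :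
          (Fin m → k) × k × (Fin m → k)) ∈ X) ∧
      (∃ p₀ : (Fin m → k) × k, ∀ t : k,
        π (fun i => α i * t + α i ^ 2 / 4, t, fun i => t + α i / 2) =
          p₀ + t • ((α, 1) : (Fin m → k) × k))) ∧
    (∀ v : (Fin m → k) × k, v.2 ≠ 0 →
      ∃ p l : (Fin m → k) × k × (Fin m → k), (∀ t : k, p + t • l ∈ X) ∧
        ∃ (p₀ : (Fin m → k) × k) (c : k), c ≠ 0 ∧
          ∀ t : k, π (p + t • l) = p₀ + (c * t) • v) := by
  have h4 : (4 : k) ≠ 0 := by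
    have : (4 : k) = 2 * 2 := by norm_num
    rw [this]; exact mul_ne_zero h2 h2
  subst hX hπ
  constructor
  · intro α
    constructor
    · intro t i
      field_simp [h4]
      ring
    · refine ⟨(fun i => α i ^ 2 / 4, 0), fun t => ?_⟩
      ext
      · simp [mul_comm]; ring
      · simp
  · intro v hv
    refine ⟨(fun i => (v.1 i / v.2) ^ 2 / 4, 0, fun i => (v.1 i / v.2) / 2),
      (fun i => v.1 i / v.2, 1, fun _ => 1), fun t i => ?_, (fun i => (v.1 i / v.2) ^ 2 / 4, 0),
      v.2⁻¹, inv_ne_zero hv, fun t => ?_⟩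
    · simp only [Prod.fst_add, Prod.snd_add, Prod.smul_fst, Prod.smul_snd, Pi.add_apply,
        Pi.smul_apply, smul_eq_mul]
      field_simp [h4]
      ring
    · ext
      · simp only [Prod.fst_add, Prod.snd_add, Prod.smul_fst, Prod.smul_snd, Pi.add_apply,
          Pi.smul_apply, smul_eq_mul]
        field_simp
      · simp only [Prod.fst_add, Prod.snd_add, Prod.smul_fst, Prod.smul_snd, smul_eq_mul]
        field_simp
end
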